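/- Let 𝕜 be a field, ι a nonempty finite index type, (V_j)_{j∈ι} a family of 𝕜-vector spaces, v ∈ ⨂_{j∈ι} V_j, and r : ι → ℕ. Then the following are equivalent: (a) dim U_j(v) = r(j) for every j ∈ ι; (b) there exist, for each j ∈ ι, a linearly independent family u^{(j)} : Fin r(j) → V_j and a coefficient tensor C : (Π_{j∈ι} Fin r(j)) → 𝕜 such that v = Σ_{i} C(i) • (⨂_{j∈ι} u^{(j)}_{i(j)}), and for every j ∈ ι the j-th matricization M_j(C), the matrix indexed by Fin r(j) × (Π_{k≠j} Fin r(k)) with entry C at the combined multi-index, has rank r(j). Moreover, when (a) holds, each family u^{(j)} can be taken to be a basis of U_j(v), and for fixed linearly independent families u^{(j)} the coefficient tensor C representing v is unique. -/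

import Mathlib

/-!
Write `v = ∑ i, C i • ⨂ⱼ u⁽ʲ⁾ (i j)` with linearly independent families `u⁽ʲ⁾`. Contracting `v`
in all slots but `j` gives `Lⱼ (Mⱼ(C) *ᵥ w)`, where `Lⱼ` is the injective map `c ↦ ∑ c a • u⁽ʲ⁾ a`
and, choosing the functionals dual to the `u⁽ᵏ⁾`, `w` runs through all unit vectors. Hence
`Uⱼ(v) = Lⱼ (range Mⱼ(C))` and `dim Uⱼ(v) = rank Mⱼ(C)`.

Conversely, extend bases of the `Uⱼ(v)` to bases of the `Vⱼ`. The coefficient of `v` at a product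
basis vector is a coordinate of a contraction of `v`, which lies in `Uⱼ(v)`; so it vanishes unless
every factor is one of the chosen basis vectors of `Uⱼ(v)`. The same product bases show that
products of linearly independent families are linearly independent, whence `C` is unique.
-/

open scoped TensorProduct

section
variable {ι : Type*} [Fintype ι] [deq : DecidableEq ι] {𝕜 : Type*} [Field 𝕜]
  {V : ι → Type*} [∀ i, AddCommGroup (V i)] [∀ i, Module 𝕜 (V i)]

/-- The multilinear map `(m_i)_{i} ↦ (∏_{k ≠ j} φ_k (m_k)) • m_j`. -/
def contractML (j : ι) (φ : ∀ k, V k →ₗ[𝕜] 𝕜) : MultilinearMap 𝕜 V (V j) where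
  toFun m := (∏ k ∈ Finset.univ.erase j, φ k (m k)) • m j
  map_update_add' := by
    intro inst m k x y
    have h : inst = deq := Subsingleton.elim _ _
    subst h
    try dsimp only
    rcases eq_or_ne k j with rfl | hkj
    · have hprod : ∀ z : V k,
          (∏ i ∈ Finset.univ.erase k, φ i (Function.update m k z i))
            = ∏ i ∈ Finset.univ.erase k, φ i (m i) := fun z =>
        Finset.prod_congr rfl fun i hi => by
          rw [Function.update_of_ne (Finset.ne_of_mem_erase hi)]
      rw [hprod, hprod, hprod, Function.update_self, Function.update_self,
        Function.update_self, smul_add]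
    · have hmem : k ∈ Finset.univ.erase j := Finset.mem_erase.2 ⟨hkj, Finset.mem_univ k⟩
      have hprod : ∀ z : V k,
          (∏ i ∈ Finset.univ.erase j, φ i (Function.update m k z i))
            = φ k z * ∏ i ∈ (Finset.univ.erase j) \ {k}, φ i (m i) := by
        intro z
        have h1 : ∀ i, φ i (Function.update m k z i)
            = Function.update (fun i => φ i (m i)) k (φ k z) i := fun i =>
          Function.apply_update (fun i v => φ i v) m k z i
        rw [Finset.prod_congr rfl (fun i _ => h1 i)]
        exact Finset.prod_update_of_mem hmem _ _
      have hj : ∀ z : V k, Function.update m k z j = m j := fun z =>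
        Function.update_of_ne (Ne.symm hkj) _ _
      rw [hprod, hprod, hprod, hj, hj, hj, map_add, add_mul, add_smul]
  map_update_smul' := by
    intro inst m k c x
    have h : inst = deq := Subsingleton.elim _ _
    subst h
    try dsimp only
    rcases eq_or_ne k j with rfl | hkj
    · have hprod : ∀ z : V k,
          (∏ i ∈ Finset.univ.erase k, φ i (Function.update m k z i))
            = ∏ i ∈ Finset.univ.erase k, φ i (m i) := fun z =>
        Finset.prod_congr rfl fun i hi => by
          rw [Function.update_of_ne (Finset.ne_of_mem_erase hi)]
      rw [hprod, hprod, Function.update_self, Function.update_self, smul_comm]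
    · have hmem : k ∈ Finset.univ.erase j := Finset.mem_erase.2 ⟨hkj, Finset.mem_univ k⟩
      have hprod : ∀ z : V k,
          (∏ i ∈ Finset.univ.erase j, φ i (Function.update m k z i))
            = φ k z * ∏ i ∈ (Finset.univ.erase j) \ {k}, φ i (m i) := by
        intro z
        have h1 : ∀ i, φ i (Function.update m k z i)
            = Function.update (fun i => φ i (m i)) k (φ k z) i := fun i =>
          Function.apply_update (fun i v => φ i v) m k z i
        rw [Finset.prod_congr rfl (fun i _ => h1 i)]
        exact Finset.prod_update_of_mem hmem _ _
      have hj : ∀ z : V k, Function.update m k z j = m j := fun z =>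
        Function.update_of_ne (Ne.symm hkj) _ _
      rw [hprod, hprod, hj, hj, map_smul, smul_eq_mul, mul_assoc, mul_smul]

/-- The contraction `id_j ⊗ φ : ⨂ᵢ Vᵢ → V j` obtained by lifting the multilinear map
`(m_i)ᵢ ↦ (∏_{k ≠ j} φ_k (m_k)) • m_j`. -/
noncomputable def contract (j : ι) (φ : ∀ k, V k →ₗ[𝕜] 𝕜) :
    (⨂[𝕜] i, V i) →ₗ[𝕜] V j :=
  PiTensorProduct.lift (contractML j φ)

/-- The `j`-th minimal subspace of a tensor `v`. -/
noncomputable def minimalSubspace (j : ι) (v : ⨂[𝕜] i, V i) : Submodule 𝕜 (V j) :=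
  Submodule.span 𝕜 {x | ∃ φ : ∀ k, V k →ₗ[𝕜] 𝕜, contract j φ v = x}


/-- The `j`-th matricization of a coefficient tensor `C`: the matrix with rows indexed by
`Fin (r j)` and columns indexed by the remaining multi-indices, whose entry is `C` at the
combined multi-index. -/
noncomputable def matricize (r : ι → ℕ) (j : ι) (C : (∀ k, Fin (r k)) → 𝕜) :
    Matrix (Fin (r j)) (∀ k : {k : ι // k ≠ j}, Fin (r k.1)) 𝕜 :=
  fun a b => C fun k => if h : k = j then Fin.cast (by rw [h]) a else b ⟨k, h⟩


open Module
open scoped Matrix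

theorem Module.Basis.sumExtend_inl {K W κ : Type*} [DivisionRing K] [AddCommGroup W] [Module K W]
    {u : κ → W} (hu : LinearIndependent K u) (a : κ) : Basis.sumExtend hu (Sum.inl a) = u a := by
  rw [Basis.sumExtend, Basis.reindex_apply, Basis.coe_extend]
  rfl

theorem Submodule.exists_linearIndependent_span_eq_of_finrank_eq {K W : Type*} [DivisionRing K]
    [AddCommGroup W] [Module K W] (p : Submodule K W) [FiniteDimensional K p] {n : ℕ}
    (hp : finrank K p = n) :
    ∃ u : Fin n → W, LinearIndependent K u ∧ Submodule.span K (Set.range u) = p := by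
  let b := finBasisOfFinrankEq K p hp
  refine ⟨p.subtype ∘ b, b.linearIndependent.map' _ p.ker_subtype, ?_⟩
  rw [Set.range_comp, ← Submodule.map_span, b.span_eq, Submodule.map_top, Submodule.range_subtype]

@[simp]
theorem contract_tprod (j : ι) (φ : ∀ k, V k →ₗ[𝕜] 𝕜) (x : ∀ k, V k) :
    contract j φ (PiTensorProduct.tprod 𝕜 x) = (∏ k ∈ Finset.univ.erase j, φ k (x k)) • x j :=
  PiTensorProduct.lift.tprod x

theorem contract_mem_minimalSubspace (j : ι) (φ : ∀ k, V k →ₗ[𝕜] 𝕜) (v : ⨂[𝕜] i, V i) :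
    contract j φ v ∈ minimalSubspace j v :=
  Submodule.subset_span ⟨φ, rfl⟩

theorem minimalSubspace_le_span_of_mem_span {s : Set (∀ k, V k)} {v : ⨂[𝕜] i, V i}
    (hv : v ∈ Submodule.span 𝕜 (PiTensorProduct.tprod 𝕜 '' s)) (j : ι) :
    minimalSubspace j v ≤ Submodule.span 𝕜 ((fun x => x j) '' s) := by
  refine Submodule.span_le.mpr ?_
  rintro _ ⟨φ, rfl⟩
  have hgen : Submodule.span 𝕜 (PiTensorProduct.tprod 𝕜 '' s)
      ≤ (Submodule.span 𝕜 ((fun x => x j) '' s)).comap (contract j φ) := by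
    refine Submodule.span_le.mpr ?_
    rintro _ ⟨x, hx, rfl⟩
    simpa using Submodule.smul_mem _ _ (Submodule.subset_span (Set.mem_image_of_mem _ hx))
  exact hgen hv

instance finiteDimensional_minimalSubspace (j : ι) (v : ⨂[𝕜] i, V i) :
    FiniteDimensional 𝕜 (minimalSubspace j v) := by
  have hv : v ∈ Submodule.span 𝕜 (Set.range (PiTensorProduct.tprod 𝕜)) := by
    rw [PiTensorProduct.span_tprod_eq_top]; trivial
  obtain ⟨T, hT, hvT⟩ := Submodule.mem_span_finite_of_mem_span hv
  obtain ⟨s, -, hs, hsT⟩ := (Set.exists_subset_image_finite_and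
    (f := PiTensorProduct.tprod 𝕜) (s := Set.univ) (p := fun t => v ∈ Submodule.span 𝕜 t)).mp
    ⟨T, Set.image_univ.symm ▸ hT, T.finite_toSet, hvT⟩
  have := FiniteDimensional.span_of_finite 𝕜 (hs.image fun x => x j)
  exact Submodule.finiteDimensional_of_le (minimalSubspace_le_span_of_mem_span hsT j)

theorem Basis.piTensorProduct_repr_eq_coord_contract {κ : ι → Type*}
    (B : ∀ k, Basis (κ k) 𝕜 (V k)) (v : ⨂[𝕜] i, V i) (M : ∀ k, κ k) (j : ι) :
    (Basis.piTensorProduct B).repr v M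
      = (B j).coord (M j) (contract j (fun k => (B k).coord (M k)) v) := by
  induction v using PiTensorProduct.induction_on with
  | smul_tprod c x =>
    simp [Basis.piTensorProduct_repr_tprod_apply, ← Finset.prod_erase_mul _ _ (Finset.mem_univ j)]
  | add x y hx hy => simp [hx, hy]

theorem injective_sum_smul_tprod {κ : ι → Type*} [∀ j, Fintype (κ j)] {u : ∀ j, κ j → V j}
    (hu : ∀ j, LinearIndependent 𝕜 (u j)) :
    Function.Injective fun C : (∀ j, κ j) → 𝕜 =>
      ∑ i, C i • PiTensorProduct.tprod 𝕜 fun j => u j (i j) := by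
  have hprod : (fun i : (∀ j, κ j) => PiTensorProduct.tprod 𝕜 fun j => u j (i j))
      = Basis.piTensorProduct (fun j => Basis.sumExtend (hu j)) ∘ fun i j => Sum.inl (i j) := by
    funext i
    simp [Basis.sumExtend_inl]
  have hli : LinearIndependent 𝕜
      fun i : (∀ j, κ j) => PiTensorProduct.tprod 𝕜 fun j => u j (i j) :=
    hprod ▸ (Basis.piTensorProduct _).linearIndependent.comp _
      fun i i' h => funext fun j => Sum.inl_injective (congrFun h j)
  exact fun C C' h => funext (Fintype.linearIndependent_iffₛ.mp hli C C' h)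

theorem exists_eq_sum_smul_tprod {κ : ι → Type*} [∀ j, Fintype (κ j)] {u : ∀ j, κ j → V j}
    (hu : ∀ j, LinearIndependent 𝕜 (u j)) {v : ⨂[𝕜] i, V i}
    (hv : ∀ j, minimalSubspace j v ≤ Submodule.span 𝕜 (Set.range (u j))) :
    ∃ C : (∀ j, κ j) → 𝕜, v = ∑ i, C i • PiTensorProduct.tprod 𝕜 fun j => u j (i j) := by
  let B := fun j => Basis.sumExtend (hu j)
  let b := Basis.piTensorProduct B
  have hrange : Set.range (fun i : (∀ j, κ j) => PiTensorProduct.tprod 𝕜 fun j => u j (i j))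
      = b '' Set.range fun (i : ∀ j, κ j) j => (Sum.inl (i j) : κ j ⊕ _) := by
    rw [← Set.range_comp]
    congr 1
    funext i
    simp [b, B, Basis.sumExtend_inl]
  suffices hmem : v ∈ Submodule.span 𝕜
      (Set.range fun i : (∀ j, κ j) => PiTensorProduct.tprod 𝕜 fun j => u j (i j)) by
    obtain ⟨C, hC⟩ := (Submodule.mem_span_range_iff_exists_fun 𝕜).mp hmem
    exact ⟨C, hC.symm⟩
  rw [hrange, Basis.mem_span_image]
  intro M hM
  have hinl : ∀ j, ∃ a, Sum.inl a = M j := by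
    intro j
    rcases hMj : M j with a | s
    · exact ⟨a, rfl⟩
    · refine absurd ?_ (Finsupp.mem_support_iff.mp hM)
      have hker : Submodule.span 𝕜 (Set.range (u j))
          ≤ LinearMap.ker ((B j).coord (Sum.inr s)) := by
        refine Submodule.span_le.mpr ?_
        rintro _ ⟨a, rfl⟩
        simp [B, ← Basis.sumExtend_inl (hu j)]
      rw [Basis.piTensorProduct_repr_eq_coord_contract B v M j, hMj]
      exact hker (hv j (contract_mem_minimalSubspace j _ v))
  choose a ha using hinl
  exact ⟨a, funext ha⟩

theorem contract_sum_smul_tprod {r : ι → ℕ} (u : ∀ j, Fin (r j) → V j)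
    (C : (∀ k, Fin (r k)) → 𝕜) (j : ι) (φ : ∀ k, V k →ₗ[𝕜] 𝕜) :
    contract j φ (∑ i, C i • PiTensorProduct.tprod 𝕜 fun k => u k (i k))
      = Fintype.linearCombination 𝕜 (u j)
          (matricize r j C *ᵥ fun b => ∏ k : {k : ι // k ≠ j}, φ k (u k (b k))) := by
  have matricize_apply : ∀ a b,
      matricize r j C a b = C ((Equiv.piSplitAt j fun k => Fin (r k)).symm (a, b)) := by
    refine fun a b => congrArg C (funext fun k => ?_)
    rw [Equiv.piSplitAt_symm_apply]
    by_cases h : k = j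
    · subst h
      simp
    · simp [h]
  simp only [map_sum, map_smul, contract_tprod, smul_smul, Fintype.linearCombination_apply,
    Matrix.mulVec, dotProduct, Finset.sum_smul]
  rw [← (Equiv.piSplitAt j fun k => Fin (r k)).symm.sum_comp, Fintype.sum_prod_type]
  refine Finset.sum_congr rfl fun a _ => Finset.sum_congr rfl fun b _ => ?_
  have split_ne : ∀ k : {k : ι // k ≠ j},
      (Equiv.piSplitAt j fun k => Fin (r k)).symm (a, b) k = b k := fun k => by
    rw [Equiv.piSplitAt_symm_apply, dif_neg k.2]
  rw [matricize_apply, Finset.prod_subtype (p := (· ≠ j)) (F := inferInstance) _ (by simp)]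
  simp only [split_ne]
  simp [Equiv.piSplitAt_symm_apply]

theorem minimalSubspace_sum_smul_tprod {r : ι → ℕ} {u : ∀ j, Fin (r j) → V j}
    (hu : ∀ j, LinearIndependent 𝕜 (u j)) (C : (∀ k, Fin (r k)) → 𝕜) (j : ι) :
    minimalSubspace j (∑ i, C i • PiTensorProduct.tprod 𝕜 fun k => u k (i k))
      = (LinearMap.range (matricize r j C).mulVecLin).map (Fintype.linearCombination 𝕜 (u j)) := by
  refine le_antisymm (Submodule.span_le.mpr ?_) ?_
  · rintro _ ⟨φ, rfl⟩
    rw [contract_sum_smul_tprod]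
    exact Submodule.mem_map_of_mem (LinearMap.mem_range_self _ _)
  rw [Matrix.range_mulVecLin, Submodule.map_span, Submodule.span_le]
  rintro _ ⟨_, ⟨b, rfl⟩, rfl⟩
  -- contracting with the coordinate functionals dual to `u k (b k)`, `k ≠ j`, picks the column `b`
  let φ : ∀ k, V k →ₗ[𝕜] 𝕜 := fun k =>
    if h : k = j then 0 else (Basis.sumExtend (hu k)).coord (Sum.inl (b ⟨k, h⟩))
  have hφ : (fun b' => ∏ k : {k : ι // k ≠ j}, φ k (u k (b' k))) = Pi.single b 1 := by
    have hφu : ∀ (k : {k : ι // k ≠ j}) c, φ k (u k c) = if c = b k then 1 else 0 := by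
      classical
      intro k c
      simp only [φ, dif_neg k.2]
      rw [← Basis.sumExtend_inl (hu k), Basis.coord_apply, Basis.repr_self, Finsupp.single_apply]
      simp
    funext b'
    simp only [hφu, Fintype.prod_ite_zero, Finset.prod_const_one, Pi.single_apply, funext_iff]
  have hcol := contract_sum_smul_tprod u C j φ
  rw [hφ, Matrix.mulVec_single_one] at hcol
  exact hcol ▸ contract_mem_minimalSubspace j φ _

theorem finrank_minimalSubspace_sum_smul_tprod {r : ι → ℕ} {u : ∀ j, Fin (r j) → V j}
    (hu : ∀ j, LinearIndependent 𝕜 (u j)) (C : (∀ k, Fin (r k)) → 𝕜) (j : ι) :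
    finrank 𝕜 (minimalSubspace j (∑ i, C i • PiTensorProduct.tprod 𝕜 fun k => u k (i k)))
      = (matricize r j C).rank := by
  rw [minimalSubspace_sum_smul_tprod hu, Matrix.rank]
  exact (Submodule.equivMapOfInjective _ (hu j).fintypeLinearCombination_injective _
    ).finrank_eq.symm

theorem fixed_rank_tucker_characterization_general
    (v : ⨂[𝕜] j, V j) (r : ι → ℕ) :
    ((∀ j, Module.finrank 𝕜 (minimalSubspace j v) = r j) ↔
      ∃ (u : ∀ j, Fin (r j) → V j) (C : (∀ j, Fin (r j)) → 𝕜),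
        (∀ j, LinearIndependent 𝕜 (u j)) ∧
        v = ∑ i : ∀ j, Fin (r j), C i • (PiTensorProduct.tprod 𝕜 fun j => u j (i j)) ∧
        ∀ j, (matricize r j C).rank = r j) ∧
    ((∀ j, Module.finrank 𝕜 (minimalSubspace j v) = r j) →
      ∃ (u : ∀ j, Fin (r j) → V j) (C : (∀ j, Fin (r j)) → 𝕜),
        (∀ j, LinearIndependent 𝕜 (u j)) ∧
        (∀ j, Submodule.span 𝕜 (Set.range (u j)) = minimalSubspace j v) ∧
        v = ∑ i : ∀ j, Fin (r j), C i • (PiTensorProduct.tprod 𝕜 fun j => u j (i j)) ∧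
        ∀ j, (matricize r j C).rank = r j) ∧
    (∀ u : ∀ j, Fin (r j) → V j, (∀ j, LinearIndependent 𝕜 (u j)) →
      ∀ C C' : (∀ j, Fin (r j)) → 𝕜,
        (∑ i : ∀ j, Fin (r j), C i • (PiTensorProduct.tprod 𝕜 fun j => u j (i j)))
          = (∑ i : ∀ j, Fin (r j), C' i • (PiTensorProduct.tprod 𝕜 fun j => u j (i j))) →
        C = C') := by
  have tucker_of_finrank : (∀ j, finrank 𝕜 (minimalSubspace j v) = r j) →
      ∃ (u : ∀ j, Fin (r j) → V j) (C : (∀ j, Fin (r j)) → 𝕜),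
        (∀ j, LinearIndependent 𝕜 (u j)) ∧
        (∀ j, Submodule.span 𝕜 (Set.range (u j)) = minimalSubspace j v) ∧
        v = ∑ i : ∀ j, Fin (r j), C i • (PiTensorProduct.tprod 𝕜 fun j => u j (i j)) ∧
        ∀ j, (matricize r j C).rank = r j := by
    intro hr
    choose u hu hspan using fun j =>
      (minimalSubspace j v).exists_linearIndependent_span_eq_of_finrank_eq (hr j)
    obtain ⟨C, hC⟩ := exists_eq_sum_smul_tprod hu fun j => (hspan j).ge
    refine ⟨u, C, hu, hspan, hC, fun j => ?_⟩
    rw [← finrank_minimalSubspace_sum_smul_tprod hu, ← hC, hr j]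
  refine ⟨⟨fun hr => ?_, ?_⟩, tucker_of_finrank, fun u hu C C' h => injective_sum_smul_tprod hu h⟩
  · obtain ⟨u, C, hu, -, hC, hrank⟩ := tucker_of_finrank hr
    exact ⟨u, C, hu, hC, hrank⟩
  · rintro ⟨u, C, hu, rfl, hrank⟩ j
    rw [finrank_minimalSubspace_sum_smul_tprod hu, hrank j]

/-- **Characterization of tensors of fixed Tucker rank.**
For `v ∈ ⨂ⱼ Vⱼ` and `r : ι → ℕ`, the minimal subspaces satisfy `dim Uⱼ(v) = r j` for all
`j` iff `v` admits a representation `v = ∑ i, C i • ⨂ⱼ u^{(j)}_{i j}` with linearly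
independent families `u^{(j)} : Fin (r j) → Vⱼ` and a coefficient tensor `C` all of whose
matricizations `M_j(C)` have full rank `r j`.  Moreover, the `u^{(j)}` can then be taken
to be bases of the `Uⱼ(v)`, and for fixed linearly independent families the coefficient
tensor is unique. -/
theorem fixed_rank_tucker_characterization [Nonempty ι]
    (v : ⨂[𝕜] j, V j) (r : ι → ℕ) :
    ((∀ j, Module.finrank 𝕜 (minimalSubspace j v) = r j) ↔
      ∃ (u : ∀ j, Fin (r j) → V j) (C : (∀ j, Fin (r j)) → 𝕜),
        (∀ j, LinearIndependent 𝕜 (u j)) ∧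
        v = ∑ i : ∀ j, Fin (r j), C i • (PiTensorProduct.tprod 𝕜 fun j => u j (i j)) ∧
        ∀ j, (matricize r j C).rank = r j) ∧
    ((∀ j, Module.finrank 𝕜 (minimalSubspace j v) = r j) →
      ∃ (u : ∀ j, Fin (r j) → V j) (C : (∀ j, Fin (r j)) → 𝕜),
        (∀ j, LinearIndependent 𝕜 (u j)) ∧
        (∀ j, Submodule.span 𝕜 (Set.range (u j)) = minimalSubspace j v) ∧
        v = ∑ i : ∀ j, Fin (r j), C i • (PiTensorProduct.tprod 𝕜 fun j => u j (i j)) ∧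
        ∀ j, (matricize r j C).rank = r j) ∧
    (∀ u : ∀ j, Fin (r j) → V j, (∀ j, LinearIndependent 𝕜 (u j)) →
      ∀ C C' : (∀ j, Fin (r j)) → 𝕜,
        (∑ i : ∀ j, Fin (r j), C i • (PiTensorProduct.tprod 𝕜 fun j => u j (i j)))
          = (∑ i : ∀ j, Fin (r j), C' i • (PiTensorProduct.tprod 𝕜 fun j => u j (i j))) →
        C = C') :=
  fixed_rank_tucker_characterization_general v r

end
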